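/- arXiv:math/0409126 — 2 statements merged into one kernel-verified Lean document; each statement's English description precedes it below -/
import Mathlib

section
/- Tropical Cramer commutation: Let B be an n×(n+1) matrix over the Puiseux series field with nonzero entries, O = T(B), and A the matrix of principal coefficients. If Δ_{O^i}(A^i) ≠ 0 for every i = 1,…,n+1 (where M^i denotes M with the i-th column deleted), then the homogeneous linear system with coefficient matrix B has a unique projective solution [s_1 : … : s_{n+1}] with all s_i ≠ 0, and its coordinatewise tropicalization equals the point [|O^1|_t : … : |O^{n+1}|_t]. -/
/-- Tropicalization map on the field of (generalized) Puiseux series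
`HahnSeries ℝ ℂ`: `T x = - ord x`. -/
noncomputable def T (x : HahnSeries ℝ ℂ) : ℝ := -x.order

/-- Principal coefficient: the coefficient of the lowest-order term. -/
noncomputable def Pc (x : HahnSeries ℝ ℂ) : ℂ := x.coeff x.order

/-- Tropical determinant of a real square matrix. -/
noncomputable def tropDet {n : ℕ} (O : Matrix (Fin n) (Fin n) ℝ) : ℝ :=
  Finset.univ.sup' Finset.univ_nonempty (fun σ : Equiv.Perm (Fin n) => ∑ i, O i (σ i))

/-- Pseudo-determinant of `A` with respect to the tropical matrix `O`. -/
noncomputable def pseudoDet {n : ℕ} {R : Type*} [CommRing R]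
    (O : Matrix (Fin n) (Fin n) ℝ) (A : Matrix (Fin n) (Fin n) R) : R :=
  ∑ σ ∈ Finset.univ.filter
      (fun σ : Equiv.Perm (Fin n) => ∑ i, O i (σ i) = tropDet O),
    (Equiv.Perm.sign σ : ℤ) • ∏ i, A i (σ i)

/-!
The signed maximal minors `(-1)^i det B^i` of `B` span its kernel: they solve `B s = 0` by
Laplace expansion of a matrix with a repeated row, and any nonzero maximal minor makes the
kernel a line. By the Leibniz formula, `det B^i` is a signed sum of products along
permutations; the product along `σ` has order `-∑ O^i_{k,σ(k)}` and principal coefficient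
`∏ A^i_{k,σ(k)}`. So no term has order below `-|O^i|_t`, and the coefficient at `-|O^i|_t`
is exactly `Δ_{O^i}(A^i) ≠ 0`, whence `T (det B^i) = |O^i|_t`.
-/

open Finset Matrix

namespace HahnSeries

variable {Γ R : Type*} [AddCommMonoid Γ]

theorem coeff_det [PartialOrder Γ] [IsOrderedCancelAddMonoid Γ] [CommRing R]
    {m : Type*} [Fintype m] [DecidableEq m] (M : Matrix m m (HahnSeries Γ R)) (r : Γ) :
    M.det.coeff r = ∑ σ : Equiv.Perm m, (Equiv.Perm.sign σ : ℤ) • (∏ i, M i (σ i)).coeff r := by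
  rw [← det_transpose, det_apply, coeff_sum]
  simp only [Units.smul_def, transpose_apply, coeff_smul]

variable [LinearOrder Γ] [IsOrderedCancelAddMonoid Γ] [CommSemiring R] [NoZeroDivisors R]
  {ι : Type*}

theorem leadingCoeff_prod (s : Finset ι) (f : ι → HahnSeries Γ R) :
    (∏ i ∈ s, f i).leadingCoeff = ∏ i ∈ s, (f i).leadingCoeff := by
  induction s using Finset.cons_induction with
  | empty => simp
  | cons a s _ ih => rw [prod_cons, prod_cons, leadingCoeff_mul, ih]

theorem order_prod [Nontrivial R] (s : Finset ι) (f : ι → HahnSeries Γ R)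
    (hf : ∀ i ∈ s, f i ≠ 0) : (∏ i ∈ s, f i).order = ∑ i ∈ s, (f i).order := by
  induction s using Finset.cons_induction with
  | empty => simp
  | cons a s _ ih =>
    rw [forall_mem_cons] at hf
    rw [prod_cons, sum_cons, order_mul hf.1 (prod_ne_zero_iff.2 hf.2), ih hf.2]

end HahnSeries

theorem T_prod {ι : Type*} (s : Finset ι) (f : ι → HahnSeries ℝ ℂ) (hf : ∀ i ∈ s, f i ≠ 0) :
    T (∏ i ∈ s, f i) = ∑ i ∈ s, T (f i) := by
  simp only [T, HahnSeries.order_prod s f hf, sum_neg_distrib]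

theorem Pc_prod {ι : Type*} (s : Finset ι) (f : ι → HahnSeries ℝ ℂ) :
    Pc (∏ i ∈ s, f i) = ∏ i ∈ s, Pc (f i) := by
  simp only [Pc, ← HahnSeries.leadingCoeff_eq, HahnSeries.leadingCoeff_prod]

theorem coeff_neg_T (x : HahnSeries ℝ ℂ) : x.coeff (-T x) = Pc x := by
  rw [T, neg_neg, Pc]

theorem coeff_eq_zero_of_lt_neg_T {x : HahnSeries ℝ ℂ} {r : ℝ} (hr : r < -T x) :
    x.coeff r = 0 :=
  HahnSeries.coeff_eq_zero_of_lt_order (by rwa [T, neg_neg] at hr)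

theorem T_neg_one_pow_mul (k : ℕ) (x : HahnSeries ℝ ℂ) : T ((-1) ^ k * x) = T x := by
  rcases neg_one_pow_eq_or (HahnSeries ℝ ℂ) k with h | h <;> simp [h, T, HahnSeries.order_neg]

theorem le_tropDet {m : ℕ} (O : Matrix (Fin m) (Fin m) ℝ) (σ : Equiv.Perm (Fin m)) :
    ∑ i, O i (σ i) ≤ tropDet O :=
  le_sup' (fun σ : Equiv.Perm (Fin m) => ∑ i, O i (σ i)) (mem_univ σ)

section TropicalDeterminant

variable {m : ℕ} {M : Matrix (Fin m) (Fin m) (HahnSeries ℝ ℂ)}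

theorem T_prod_perm (hM : ∀ i j, M i j ≠ 0) (σ : Equiv.Perm (Fin m)) :
    T (∏ i, M i (σ i)) = ∑ i, M.map T i (σ i) :=
  T_prod _ _ fun i _ => hM i (σ i)

theorem coeff_det_eq_zero_of_lt (hM : ∀ i j, M i j ≠ 0) {r : ℝ}
    (hr : r < -tropDet (M.map T)) : M.det.coeff r = 0 := by
  rw [HahnSeries.coeff_det]
  refine sum_eq_zero fun σ _ => ?_
  have hσ : r < -T (∏ i, M i (σ i)) := by
    rw [T_prod_perm hM]
    linarith [le_tropDet (M.map T) σ]
  rw [coeff_eq_zero_of_lt_neg_T hσ, smul_zero]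

theorem coeff_det_neg_tropDet (hM : ∀ i j, M i j ≠ 0) :
    M.det.coeff (-tropDet (M.map T)) = pseudoDet (M.map T) (M.map Pc) := by
  rw [HahnSeries.coeff_det, pseudoDet, sum_filter]
  refine sum_congr rfl fun σ _ => ?_
  split_ifs with hσ
  · rw [← hσ, ← T_prod_perm hM, coeff_neg_T, Pc_prod]
    rfl
  · have hlt : -tropDet (M.map T) < -T (∏ i, M i (σ i)) := by
      rw [T_prod_perm hM]
      exact neg_lt_neg (lt_of_le_of_ne (le_tropDet _ σ) hσ)
    rw [coeff_eq_zero_of_lt_neg_T hlt, smul_zero]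

theorem det_ne_zero_of_pseudoDet_ne_zero (hM : ∀ i j, M i j ≠ 0)
    (hΔ : pseudoDet (M.map T) (M.map Pc) ≠ 0) : M.det ≠ 0 := by
  intro h
  apply hΔ
  rw [← coeff_det_neg_tropDet hM, h, HahnSeries.coeff_zero]

theorem T_det_eq_tropDet (hM : ∀ i j, M i j ≠ 0) (hΔ : pseudoDet (M.map T) (M.map Pc) ≠ 0) :
    T M.det = tropDet (M.map T) := by
  have hle : M.det.order ≤ -tropDet (M.map T) :=
    HahnSeries.order_le_of_coeff_ne_zero (coeff_det_neg_tropDet hM ▸ hΔ)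
  have hge : ¬ M.det.order < -tropDet (M.map T) := fun hlt =>
    HahnSeries.coeff_order_eq_zero.not.2 (det_ne_zero_of_pseudoDet_ne_zero hM hΔ)
      (coeff_det_eq_zero_of_lt hM hlt)
  rw [T, le_antisymm hle (not_lt.1 hge), neg_neg]

end TropicalDeterminant

namespace Matrix

variable {n : ℕ} {R : Type*} [CommRing R]

def signedMaxMinors (B : Matrix (Fin n) (Fin (n + 1)) R) : Fin (n + 1) → R :=
  fun i => (-1) ^ (i : ℕ) * (B.submatrix id i.succAbove).det

theorem mulVec_signedMaxMinors (B : Matrix (Fin n) (Fin (n + 1)) R) :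
    B *ᵥ B.signedMaxMinors = 0 := by
  funext k
  let C : Matrix (Fin (n + 1)) (Fin (n + 1)) R := of (Fin.cons (B k) B)
  have hC : C.det = 0 := det_zero_of_row_eq (Fin.succ_ne_zero k).symm rfl
  rw [det_succ_row_zero] at hC
  rw [Pi.zero_apply, ← hC, mulVec, dotProduct]
  refine sum_congr rfl fun j _ => ?_
  change B k j * ((-1) ^ (j : ℕ) * _) = (-1) ^ (j : ℕ) * B k j * (B.submatrix id j.succAbove).det
  ring

theorem submatrix_mulVec_comp_succAbove (B : Matrix (Fin n) (Fin (n + 1)) R) {p : Fin (n + 1)}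
    {v : Fin (n + 1) → R} (hv : v p = 0) :
    B.submatrix id p.succAbove *ᵥ (v ∘ p.succAbove) = B *ᵥ v := by
  funext k
  simp [mulVec, dotProduct, Fin.sum_univ_succAbove _ p, hv]

theorem eq_smul_of_mulVec_eq_zero {K : Type*} [Field K] (B : Matrix (Fin n) (Fin (n + 1)) K)
    {p : Fin (n + 1)} (hp : (B.submatrix id p.succAbove).det ≠ 0) {s t : Fin (n + 1) → K}
    (hs : B *ᵥ s = 0) (ht : B *ᵥ t = 0) (hsp : s p ≠ 0) : t = (t p / s p) • s := by
  set v := s p • t - t p • s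
  have hvp : v p = 0 := by simp [v, mul_comm]
  have hv : v ∘ p.succAbove = 0 := eq_zero_of_mulVec_eq_zero hp <| by
    rw [submatrix_mulVec_comp_succAbove B hvp, mulVec_sub, mulVec_smul, mulVec_smul, hs, ht]
    simp
  have hv0 : v = 0 := by
    funext k
    rcases Fin.eq_self_or_eq_succAbove p k with rfl | ⟨j, rfl⟩
    · exact hvp
    · exact congrFun hv j
  funext k
  have hk := congrFun hv0 k
  simp only [v, Pi.sub_apply, Pi.smul_apply, smul_eq_mul, Pi.zero_apply] at hk
  simp only [Pi.smul_apply, smul_eq_mul]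
  field_simp
  linear_combination hk

end Matrix

theorem tropical_cramer {n : ℕ}
    (B : Matrix (Fin n) (Fin (n + 1)) (HahnSeries ℝ ℂ)) (hB : ∀ i j, B i j ≠ 0)
    (O : Matrix (Fin n) (Fin (n + 1)) ℝ) (hO : ∀ i j, O i j = T (B i j))
    (A : Matrix (Fin n) (Fin (n + 1)) ℂ) (hA : ∀ i j, A i j = Pc (B i j))
    (hΔ : ∀ i : Fin (n + 1),
      pseudoDet (O.submatrix id i.succAbove) (A.submatrix id i.succAbove) ≠ 0) :
    ∃ s : Fin (n + 1) → HahnSeries ℝ ℂ,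
      (∀ i, s i ≠ 0) ∧
      B.mulVec s = 0 ∧
      (∀ s' : Fin (n + 1) → HahnSeries ℝ ℂ, B.mulVec s' = 0 →
        ∃ c : HahnSeries ℝ ℂ, s' = c • s) ∧
      ∃ lam : ℝ, ∀ i : Fin (n + 1),
        T (s i) = tropDet (O.submatrix id i.succAbove) + lam := by
  obtain rfl : O = B.map T := Matrix.ext hO
  obtain rfl : A = B.map Pc := Matrix.ext hA
  have hminor (i : Fin (n + 1)) : ∀ a b, B.submatrix id i.succAbove a b ≠ 0 :=
    fun a b => hB a _
  have hs (i : Fin (n + 1)) : B.signedMaxMinors i ≠ 0 :=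
    mul_ne_zero (pow_ne_zero _ (neg_ne_zero.2 one_ne_zero))
      (det_ne_zero_of_pseudoDet_ne_zero (hminor i) (hΔ i))
  refine ⟨B.signedMaxMinors, hs, B.mulVec_signedMaxMinors, fun s' hs' => ?_, 0, fun i => ?_⟩
  · exact ⟨_, B.eq_smul_of_mulVec_eq_zero (p := 0)
      (det_ne_zero_of_pseudoDet_ne_zero (hminor 0) (hΔ 0)) B.mulVec_signedMaxMinors hs' (hs 0)⟩
  · rw [Matrix.signedMaxMinors, T_neg_one_pow_mul, T_det_eq_tropDet (hminor i) (hΔ i), add_zero]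
    rfl
end

section
/- The stable tropical solution lies on each tropical hyperplane: for an n×(n+1) real matrix O, the point p = (|O^1|_t, …, |O^{n+1}|_t) satisfies, for each row u, that the maximum max_{1 ≤ l ≤ n+1} (o_{u,l} + |O^l|_t) is attained for at least two distinct indices l. -/
/-! Stack the row `O u` on top of `O` to get a square matrix `A` with a repeated row. Tropical
Laplace expansion along the top row shows that `O u l + p l ≤ tropDet A` for every `l`, with
equality at `l = σ 0` for any permutation `σ` attaining `tropDet A`. Composing such a `σ` with the
transposition of the two equal rows gives another optimal permutation, which sends the top row to
a different column. -/

open Equiv Finset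

section TropDet

variable {n : ℕ}

theorem sum_le_tropDet (A : Matrix (Fin n) (Fin n) ℝ) (σ : Perm (Fin n)) :
    ∑ i, A i (σ i) ≤ tropDet A :=
  le_sup' (fun σ : Perm (Fin n) => ∑ i, A i (σ i)) (mem_univ σ)

theorem exists_sum_eq_tropDet (A : Matrix (Fin n) (Fin n) ℝ) :
    ∃ σ : Perm (Fin n), ∑ i, A i (σ i) = tropDet A := by
  obtain ⟨σ, -, hσ⟩ := exists_mem_eq_sup' univ_nonempty fun σ : Perm (Fin n) => ∑ i, A i (σ i)
  exact ⟨σ, hσ.symm⟩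

theorem Equiv.Perm.exists_apply_zero_eq_and_apply_succ_eq (l : Fin (n + 1)) (π : Perm (Fin n)) :
    ∃ σ : Perm (Fin (n + 1)), σ 0 = l ∧ ∀ i, σ i.succ = l.succAbove (π i) := by
  have hinj : Function.Injective (Fin.cons l (l.succAbove ∘ π) : Fin (n + 1) → Fin (n + 1)) :=
    Fin.cons_injective_iff.mpr
      ⟨fun ⟨i, hi⟩ => Fin.succAbove_ne l (π i) hi, Fin.succAbove_right_injective.comp π.injective⟩
  exact ⟨ofBijective _ (Finite.injective_iff_bijective.mp hinj), rfl, fun i => rfl⟩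

theorem Equiv.Perm.exists_apply_succ_eq_succAbove (σ : Perm (Fin (n + 1))) :
    ∃ π : Perm (Fin n), ∀ i, σ i.succ = (σ 0).succAbove (π i) := by
  have hne (i : Fin n) : σ i.succ ≠ σ 0 := σ.injective.ne (Fin.succ_ne_zero i)
  choose g hg using fun i => Fin.exists_succAbove_eq (hne i)
  have hinj : Function.Injective g := fun a b hab =>
    Fin.succ_injective _ (σ.injective (by rw [← hg a, ← hg b, hab]))
  exact ⟨ofBijective g (Finite.injective_iff_bijective.mp hinj), fun i => (hg i).symm⟩

theorem sum_cons_apply_perm (r : Fin (n + 1) → ℝ) (B : Matrix (Fin n) (Fin (n + 1)) ℝ)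
    (σ : Perm (Fin (n + 1))) :
    ∑ i, Matrix.of (Fin.cons r B : Fin (n + 1) → Fin (n + 1) → ℝ) i (σ i)
      = r (σ 0) + ∑ i, B i (σ i.succ) := by
  rw [Fin.sum_univ_succ]
  rfl

theorem add_tropDet_submatrix_le_tropDet_cons (r : Fin (n + 1) → ℝ)
    (B : Matrix (Fin n) (Fin (n + 1)) ℝ) (l : Fin (n + 1)) :
    r l + tropDet (B.submatrix id l.succAbove)
      ≤ tropDet (Matrix.of (Fin.cons r B : Fin (n + 1) → Fin (n + 1) → ℝ)) := by
  obtain ⟨π, hπ⟩ := exists_sum_eq_tropDet (B.submatrix id l.succAbove)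
  obtain ⟨σ, hσ0, hσ⟩ := Perm.exists_apply_zero_eq_and_apply_succ_eq l π
  calc r l + tropDet (B.submatrix id l.succAbove)
      = ∑ i, Matrix.of (Fin.cons r B : Fin (n + 1) → Fin (n + 1) → ℝ) i (σ i) := by
        simp only [sum_cons_apply_perm, hσ0, hσ, ← hπ, Matrix.submatrix_apply, id]
    _ ≤ _ := sum_le_tropDet _ σ

theorem sum_cons_le_add_tropDet_submatrix (r : Fin (n + 1) → ℝ)
    (B : Matrix (Fin n) (Fin (n + 1)) ℝ) (σ : Perm (Fin (n + 1))) :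
    ∑ i, Matrix.of (Fin.cons r B : Fin (n + 1) → Fin (n + 1) → ℝ) i (σ i)
      ≤ r (σ 0) + tropDet (B.submatrix id (σ 0).succAbove) := by
  obtain ⟨π, hπ⟩ := σ.exists_apply_succ_eq_succAbove
  rw [sum_cons_apply_perm]
  gcongr
  simpa only [hπ, Matrix.submatrix_apply, id] using
    sum_le_tropDet (B.submatrix id (σ 0).succAbove) π

end TropDet

theorem sum_apply_mul_swap_of_row_eq {ι R : Type*} [Fintype ι] [DecidableEq ι] [AddCommMonoid R]
    (A : Matrix ι ι R) {a b : ι} (hab : A a = A b) (σ : Perm ι) :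
    ∑ i, A i ((σ * swap a b) i) = ∑ i, A i (σ i) := by
  have hA : ∀ i, A (swap a b i) = A i := fun i => by
    rcases eq_or_ne i a with rfl | hia
    · rw [swap_apply_left, hab]
    rcases eq_or_ne i b with rfl | hib
    · rw [swap_apply_right, hab]
    · rw [swap_apply_of_ne_of_ne hia hib]
  rw [← Equiv.sum_comp (swap a b)]
  simp only [Perm.mul_apply, swap_apply_self, hA]

theorem stable_solution_on_hyperplanes {n : ℕ} (O : Matrix (Fin n) (Fin (n + 1)) ℝ)
    (p : Fin (n + 1) → ℝ)
    (hp : ∀ l : Fin (n + 1), p l = tropDet (O.submatrix id l.succAbove)) :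
    ∀ u : Fin n, ∃ l m : Fin (n + 1), l ≠ m ∧
      O u l + p l = O u m + p m ∧
      ∀ j : Fin (n + 1), O u j + p j ≤ O u l + p l := by
  intro u
  set A := Matrix.of (Fin.cons (O u) O : Fin (n + 1) → Fin (n + 1) → ℝ)
  have hle (j : Fin (n + 1)) : O u j + p j ≤ tropDet A := by
    rw [hp]
    exact add_tropDet_submatrix_le_tropDet_cons (O u) O j
  have hge (σ : Perm (Fin (n + 1))) (hσ : ∑ i, A i (σ i) = tropDet A) :
      tropDet A ≤ O u (σ 0) + p (σ 0) := by
    rw [hp, ← hσ]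
    exact sum_cons_le_add_tropDet_submatrix (O u) O σ
  obtain ⟨σ, hσ⟩ := exists_sum_eq_tropDet A
  have hswap : ∑ i, A i ((σ * swap 0 u.succ) i) = tropDet A := by
    rw [sum_apply_mul_swap_of_row_eq A (a := 0) (b := u.succ) rfl σ, hσ]
  have hl := le_antisymm (hle _) (hge σ hσ)
  have hm := le_antisymm (hle _) (hge _ hswap)
  rw [Perm.mul_apply, swap_apply_left] at hm
  exact ⟨σ 0, σ u.succ, σ.injective.ne (Fin.succ_ne_zero u).symm, hl.trans hm.symm,
    fun j => hl ▸ hle j⟩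
end
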